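/- arXiv:2211.02805 — 2 statements merged into one kernel-verified Lean document; each statement's English description precedes it below -/
import Mathlib

section
/- If problem (1.5) admits a positive classical solution on Ω, then k > c. -/
open Set

noncomputable def vlap {N : ℕ} (f : EuclideanSpace ℝ (Fin N) → ℝ)
    (x : EuclideanSpace ℝ (Fin N)) : ℝ :=
  ∑ i : Fin N, fderiv ℝ (fun y => fderiv ℝ f y (EuclideanSpace.single i 1)) x
    (EuclideanSpace.single i 1)

/-- `f` is twice continuously differentiable in `Ω`, continuous on `closure Ω`,
strictly positive in `Ω` and vanishes on the boundary `frontier Ω`. -/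
def PosDirichlet {N : ℕ} (Ω : Set (EuclideanSpace ℝ (Fin N)))
    (f : EuclideanSpace ℝ (Fin N) → ℝ) : Prop :=
  ContDiffOn ℝ 2 f Ω ∧ ContinuousOn f (closure Ω) ∧ (∀ x ∈ Ω, 0 < f x) ∧
    ∀ x ∈ frontier Ω, f x = 0

/-!
At an interior maximum `x₀` of `I` (which exists because `I > 0` in `Ω` and `I = 0` on `∂Ω`)
every pure second derivative of `I` is nonpositive, so `ΔI(x₀) ≤ 0`. The equation for `I` then gives
`(k S - b - c (S + I)) I ≥ 0` at `x₀`, hence `(k - c) S ≥ b + c I > 0` there, and `S(x₀) > 0`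
forces `k > c`.
-/

open Filter Topology

/-- If the second derivative were positive, `x` would also be a local minimum, so `g` would be
locally constant. -/
theorem IsLocalMax.deriv_deriv_nonpos {g : ℝ → ℝ} {x : ℝ} (h : IsLocalMax g x)
    (hc : ContinuousAt g x) : deriv (deriv g) x ≤ 0 := by
  by_contra! hpos
  have hmin : IsLocalMin g x := isLocalMin_of_deriv_deriv_pos hpos h.deriv_eq_zero hc
  have hconst : g =ᶠ[𝓝 x] fun _ => g x :=
    (hmin.and h).mono fun _ hy => le_antisymm hy.2 hy.1
  exact hpos.ne' (by simpa using hconst.deriv.deriv_eq)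

theorem IsLocalMax.fderiv_fderiv_apply_nonpos {E : Type*} [NormedAddCommGroup E]
    [NormedSpace ℝ E] {f : E → ℝ} {x : E} (h : IsLocalMax f x) (hf : ContDiffAt ℝ 2 f x)
    (v : E) : fderiv ℝ (fun y => fderiv ℝ f y v) x v ≤ 0 := by
  set line : ℝ → E := fun t => x + t • v
  have hline : ∀ t, HasDerivAt line v t := fun t => by
    simpa [line] using ((hasDerivAt_id t).smul_const v).const_add x
  have hline0 : line 0 = x := by simp [line]
  have hline_tendsto : Tendsto line (𝓝 0) (𝓝 x) := hline0 ▸ (hline 0).continuousAt.tendsto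
  have hderiv : deriv (f ∘ line) =ᶠ[𝓝 0] fun t => fderiv ℝ f (line t) v := by
    filter_upwards [hline_tendsto.eventually (hf.eventually (by simp))] with t ht
    exact ((ht.differentiableAt (by simp)).hasFDerivAt.comp_hasDerivAt t (hline t)).deriv
  have hsecond : HasDerivAt (fun t => fderiv ℝ f (line t) v)
      (fderiv ℝ (fun y => fderiv ℝ f y v) x v) 0 := by
    have hd : DifferentiableAt ℝ (fun y => fderiv ℝ f y v) (line 0) := by
      rw [hline0]
      exact ((hf.fderiv_right le_rfl).differentiableAt one_ne_zero).clm_apply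
        (differentiableAt_const v)
    have := hd.hasFDerivAt.comp_hasDerivAt 0 (hline 0)
    rwa [hline0] at this
  have hmax : IsLocalMax (f ∘ line) 0 := by
    rw [← hline0] at h
    exact h.comp_continuous (hline 0).continuousAt
  rw [← hsecond.deriv, ← hderiv.deriv_eq]
  exact hmax.deriv_deriv_nonpos
    (ContinuousAt.comp (g := f) (hline0 ▸ hf.continuousAt) (hline 0).continuousAt)

theorem vlap_nonpos_of_isLocalMax {N : ℕ} {f : EuclideanSpace ℝ (Fin N) → ℝ}
    {x : EuclideanSpace ℝ (Fin N)} (h : IsLocalMax f x) (hf : ContDiffAt ℝ 2 f x) :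
    vlap f x ≤ 0 :=
  Finset.sum_nonpos fun _ _ => h.fderiv_fderiv_apply_nonpos hf _

theorem exists_isLocalMax_of_pos_of_eq_zero_on_frontier {X : Type*} [PseudoMetricSpace X]
    [ProperSpace X] {Ω : Set X} (hΩ : IsOpen Ω) (hne : Ω.Nonempty) (hbd : Bornology.IsBounded Ω)
    {f : X → ℝ} (hc : ContinuousOn f (closure Ω)) (hpos : ∀ x ∈ Ω, 0 < f x)
    (hzero : ∀ x ∈ frontier Ω, f x = 0) : ∃ x ∈ Ω, IsLocalMax f x := by
  obtain ⟨x₁, hx₁⟩ := hne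
  obtain ⟨x₀, hx₀, hmax⟩ :=
    hbd.isCompact_closure.exists_isMaxOn ⟨x₁, subset_closure hx₁⟩ hc
  have hx₀Ω : x₀ ∈ Ω := by
    by_contra hout
    have hfr : x₀ ∈ frontier Ω := by rw [hΩ.frontier_eq]; exact ⟨hx₀, hout⟩
    have hle : f x₁ ≤ f x₀ := hmax (subset_closure hx₁)
    linarith [hzero x₀ hfr, hpos x₁ hx₁]
  exact ⟨x₀, hx₀Ω, (hmax.on_subset subset_closure).isLocalMax (hΩ.mem_nhds hx₀Ω)⟩

theorem stmt1_general {N : ℕ} (Ω : Set (EuclideanSpace ℝ (Fin N)))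
    (hΩopen : IsOpen Ω) (hΩconn : IsConnected Ω) (hΩbd : Bornology.IsBounded Ω)
    (b c k d : ℝ) (hb : 0 < b) (hc : 0 < c) (hd : 0 < d)
    (S I : EuclideanSpace ℝ (Fin N) → ℝ)
    (hS : PosDirichlet Ω S) (hI : PosDirichlet Ω I)
    (heqI : ∀ x ∈ Ω, -d * vlap I x
      = k * S x * I x - b * I x - c * (S x + I x) * I x) :
    c < k := by
  obtain ⟨hI2, hIc, hIpos, hIzero⟩ := hI
  obtain ⟨x₀, hx₀, hmax⟩ := exists_isLocalMax_of_pos_of_eq_zero_on_frontier hΩopen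
    hΩconn.nonempty hΩbd hIc hIpos hIzero
  have hlap : vlap I x₀ ≤ 0 :=
    vlap_nonpos_of_isLocalMax hmax (hI2.contDiffAt (hΩopen.mem_nhds hx₀))
  have hS₀ := hS.2.2.1 x₀ hx₀
  have hI₀ := hIpos x₀ hx₀
  have hdiffusion : 0 ≤ -d * vlap I x₀ := mul_nonneg_of_nonpos_of_nonpos (by linarith) hlap
  have hreaction : 0 ≤ (k * S x₀ - b - c * (S x₀ + I x₀)) * I x₀ := by
    linarith [heqI x₀ hx₀]
  have hrate := nonneg_of_mul_nonneg_left hreaction hI₀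
  refine lt_of_mul_lt_mul_right (a := S x₀) ?_ hS₀.le
  linarith [mul_pos hc hI₀]

/-- If problem (1.5) admits a positive classical solution on Ω, then k > c. -/
theorem stmt1 {N : ℕ} (hN : 1 ≤ N) (Ω : Set (EuclideanSpace ℝ (Fin N)))
    (hΩopen : IsOpen Ω) (hΩconn : IsConnected Ω) (hΩbd : Bornology.IsBounded Ω)
    (a b c k d : ℝ) (ha : 0 < a) (hb : 0 < b) (hc : 0 < c) (hk : 0 < k) (hd : 0 < d)
    (hab : b < a)
    (S I : EuclideanSpace ℝ (Fin N) → ℝ)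
    (hS : PosDirichlet Ω S) (hI : PosDirichlet Ω I)
    (heqS : ∀ x ∈ Ω, -d * vlap S x
      = a * (S x + I x) - b * S x - c * (S x + I x) * S x - k * S x * I x)
    (heqI : ∀ x ∈ Ω, -d * vlap I x
      = k * S x * I x - b * I x - c * (S x + I x) * I x) :
    c < k :=
  stmt1_general Ω hΩopen hΩconn hΩbd b c k d hb hc hd S I hS hI heqI
end

section
/- Let Ω ⊂ ℝ^N be a nonempty bounded open convex set and let ṽ > 0 be a constant. Suppose v : Ω̄ × [0, ∞) → ℝ is such that for each t ≥ 0 the function v(·, t) is continuous on Ω̄, continuously differentiable in Ω, and strictly positive on Ω̄. If ∫_Ω ( v(x,t) − ṽ − ṽ·ln(v(x,t)/ṽ) ) dx → 0 as t → ∞ and sup_{x ∈ Ω} |∇_x v(x,t)| → 0 as t → ∞, then ∫_Ω | v(x,t) − ṽ | dx → 0 as t → ∞. -/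
open Set Filter Topology MeasureTheory

/-!
The integrand `φ w = w - ṽ - ṽ log (w / ṽ)` is convex on `(0, ∞)`, nonnegative, and vanishes
exactly at `ṽ`. Monotonicity of its secant slopes through `ṽ` makes it grow at least linearly
away from `ṽ`: for every `δ ∈ (0, ṽ)` there is `c > 0` with `|w - ṽ| ≤ δ + φ w / c` for all
`w > 0`. Integrating over the finite-measure set `Ω` gives
`∫ |v - ṽ| ≤ δ |Ω| + (∫ φ ∘ v) / c`, whose right side tends to `δ |Ω|`, and `δ` is arbitrary.
-/

noncomputable def entropyDensity (a w : ℝ) : ℝ := w - a - a * Real.log (w / a)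

section entropyDensity

variable {a w : ℝ}

lemma entropyDensity_self (ha : 0 < a) : entropyDensity a a = 0 := by
  simp [entropyDensity, ha.ne']

lemma entropyDensity_nonneg (ha : 0 < a) (hw : 0 < w) : 0 ≤ entropyDensity a w := by
  have h := mul_le_mul_of_nonneg_left (Real.log_le_sub_one_of_pos (div_pos hw ha)) ha.le
  rw [mul_sub, mul_div_cancel₀ _ ha.ne', mul_one] at h
  unfold entropyDensity; linarith

lemma entropyDensity_pos (ha : 0 < a) (hw : 0 < w) (hwa : w ≠ a) : 0 < entropyDensity a w := by
  have hne : w / a ≠ 1 := fun h => hwa (by rwa [div_eq_one_iff_eq ha.ne'] at h)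
  have h := mul_lt_mul_of_pos_left (Real.log_lt_sub_one_of_pos (div_pos hw ha) hne) ha
  rw [mul_sub, mul_div_cancel₀ _ ha.ne', mul_one] at h
  unfold entropyDensity; linarith

lemma continuousOn_entropyDensity (ha : a ≠ 0) : ContinuousOn (entropyDensity a) (Ioi 0) :=
  ((continuousOn_id.sub continuousOn_const).sub (continuousOn_const.mul
    ((continuousOn_id.div_const a).log fun _ hw => div_ne_zero (ne_of_gt hw) ha)))

lemma convexOn_entropyDensity (ha : 0 < a) : ConvexOn ℝ (Ioi 0) (entropyDensity a) := by
  refine ((((convexOn_id (convex_Ioi 0)).add_const (a * Real.log a - a)).add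
    (strictConcaveOn_log_Ioi.concaveOn.neg.smul ha.le))).congr fun w (hw : 0 < w) => ?_
  simp only [entropyDensity, Pi.add_apply, Pi.neg_apply, id, smul_eq_mul,
    Real.log_div hw.ne' ha.ne']
  ring

end entropyDensity

theorem ConvexOn.abs_sub_le_add_div {s : Set ℝ} {f : ℝ → ℝ} (hf : ConvexOn ℝ s f)
    {a δ c w : ℝ} (hδ : 0 < δ) (hc : 0 < c) (ha : a ∈ s) (hfa : f a = 0)
    (hleft : a - δ ∈ s) (hright : a + δ ∈ s)
    (hcl : c * δ ≤ f (a - δ)) (hcr : c * δ ≤ f (a + δ)) (hw : w ∈ s) (hfw : 0 ≤ f w) :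
    |w - a| ≤ δ + f w / c := by
  rcases le_or_gt |w - a| δ with hnear | hfar
  · linarith [div_nonneg hfw hc.le]
  suffices c * |w - a| ≤ f w by linarith [(le_div_iff₀' hc).2 this]
  rcases lt_abs.mp hfar with hgt | hlt
  · have hslope := hf.secant_mono ha hright hw (by linarith) (by linarith) (by linarith)
    rw [hfa, sub_zero, sub_zero, add_sub_cancel_left, div_le_div_iff₀ hδ (by linarith)] at hslope
    rw [abs_of_pos (by linarith)]
    nlinarith
  · have hslope := hf.secant_mono ha hw hleft (by linarith) (by linarith) (by linarith)
    rw [hfa, sub_zero, sub_zero, sub_sub_cancel_left, ← neg_sub a w, div_neg, div_neg,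
      neg_le_neg_iff, div_le_div_iff₀ hδ (by linarith)] at hslope
    rw [abs_of_neg (by linarith), neg_sub]
    nlinarith

lemma exists_abs_sub_le_add_entropyDensity_div {a δ : ℝ} (ha : 0 < a) (hδ : 0 < δ)
    (hδa : δ < a) :
    ∃ c > 0, ∀ w, 0 < w → |w - a| ≤ δ + entropyDensity a w / c := by
  set m := min (entropyDensity a (a - δ)) (entropyDensity a (a + δ))
  have hm : 0 < m := lt_min (entropyDensity_pos ha (by linarith) (by linarith))
    (entropyDensity_pos ha (by linarith) (by linarith))
  have hmδ : m / δ * δ = m := div_mul_cancel₀ m hδ.ne'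
  refine ⟨m / δ, div_pos hm hδ, fun w hw => ?_⟩
  exact (convexOn_entropyDensity ha).abs_sub_le_add_div hδ (div_pos hm hδ) ha
    (entropyDensity_self ha) (sub_pos.2 hδa) (add_pos ha hδ)
    (by rw [hmδ]; exact min_le_left _ _) (by rw [hmδ]; exact min_le_right _ _) hw
    (entropyDensity_nonneg ha hw)

theorem tendsto_integral_abs_sub_of_tendsto_integral_entropyDensity {ι α : Type*}
    {l : Filter ι} [MeasurableSpace α] {μ : Measure α} [IsFiniteMeasure μ] {a : ℝ} (ha : 0 < a)
    {u : ι → α → ℝ} (hpos : ∀ᶠ i in l, ∀ᵐ x ∂μ, 0 < u i x)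
    (hint : ∀ᶠ i in l, Integrable (fun x => entropyDensity a (u i x)) μ)
    (hent : Tendsto (fun i => ∫ x, entropyDensity a (u i x) ∂μ) l (𝓝 0)) :
    Tendsto (fun i => ∫ x, |u i x - a| ∂μ) l (𝓝 0) := by
  refine tendsto_order.2 ⟨fun b hb => Eventually.of_forall fun i =>
    hb.trans_le (integral_nonneg fun x => abs_nonneg _), fun ε hε => ?_⟩
  have hsmall : Tendsto (fun δ => δ * μ.real univ) (𝓝[>] 0) (𝓝 0) := by
    simpa using (tendsto_id.mul_const (μ.real univ)).mono_left (nhdsWithin_le_nhds (a := 0))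
  have hnear_pos : ∀ᶠ δ in 𝓝[>] (0 : ℝ), 0 < δ := self_mem_nhdsWithin
  have hnear_lt : ∀ᶠ δ in 𝓝[>] (0 : ℝ), δ < a :=
    eventually_nhdsWithin_of_eventually_nhds (eventually_lt_nhds ha)
  obtain ⟨δ, hδ, hδa, hδε⟩ := (hnear_pos.and (hnear_lt.and (hsmall.eventually_lt_const hε))).exists
  obtain ⟨c, hc, hbound⟩ := exists_abs_sub_le_add_entropyDensity_div ha hδ hδa
  have hlim : Tendsto (fun i => δ * μ.real univ + (∫ x, entropyDensity a (u i x) ∂μ) / c) l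
      (𝓝 (δ * μ.real univ)) := by
    simpa using tendsto_const_nhds.add (hent.div_const c)
  filter_upwards [hlim.eventually_lt_const hδε, hpos, hint] with i hi hposi hinti
  calc ∫ x, |u i x - a| ∂μ ≤ ∫ x, (δ + entropyDensity a (u i x) / c) ∂μ :=
        integral_mono_of_nonneg (ae_of_all _ fun _ => abs_nonneg _)
          ((integrable_const δ).add (hinti.div_const c)) (hposi.mono fun x hx => hbound _ hx)
    _ = δ * μ.real univ + (∫ x, entropyDensity a (u i x) ∂μ) / c := by
        rw [integral_add (integrable_const δ) (hinti.div_const c), integral_const, integral_div,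
          smul_eq_mul, mul_comm]
    _ < ε := hi

theorem stmt18_general {N : ℕ} (Ω : Set (EuclideanSpace ℝ (Fin N)))
    (hΩbd : Bornology.IsBounded Ω)
    (vt : ℝ) (hvt : 0 < vt)
    (v : EuclideanSpace ℝ (Fin N) → ℝ → ℝ)
    (hvcont : ∀ t ≥ (0 : ℝ), ContinuousOn (fun x => v x t) (closure Ω))
    (hvpos : ∀ t ≥ (0 : ℝ), ∀ x ∈ closure Ω, 0 < v x t)
    (hent : Tendsto (fun t => ∫ x in Ω, (v x t - vt - vt * Real.log (v x t / vt)))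
      atTop (𝓝 0)) :
    Tendsto (fun t => ∫ x in Ω, |v x t - vt|) atTop (𝓝 0) := by
  have : IsFiniteMeasure (volume.restrict Ω) :=
    isFiniteMeasure_restrict.2 hΩbd.measure_lt_top.ne
  refine tendsto_integral_abs_sub_of_tendsto_integral_entropyDensity hvt ?_ ?_ hent
  · filter_upwards [eventually_ge_atTop 0] with t ht
    exact ae_mono (Measure.restrict_mono subset_closure le_rfl)
      (ae_restrict_of_forall_mem isClosed_closure.measurableSet (hvpos t ht))
  · filter_upwards [eventually_ge_atTop 0] with t ht
    have hcont : ContinuousOn (fun x => entropyDensity vt (v x t)) (closure Ω) :=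
      (continuousOn_entropyDensity hvt.ne').comp (hvcont t ht) (hvpos t ht)
    exact (hcont.integrableOn_compact hΩbd.isCompact_closure).mono_set subset_closure

/-- If the entropy functional ∫_Ω (v - ṽ - ṽ ln(v/ṽ)) tends to 0 and the gradient of v
tends uniformly to 0, then ∫_Ω |v - ṽ| tends to 0. -/
theorem stmt18 {N : ℕ} (Ω : Set (EuclideanSpace ℝ (Fin N)))
    (hΩopen : IsOpen Ω) (hΩne : Ω.Nonempty) (hΩbd : Bornology.IsBounded Ω)
    (hΩconv : Convex ℝ Ω)
    (vt : ℝ) (hvt : 0 < vt)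
    (v : EuclideanSpace ℝ (Fin N) → ℝ → ℝ)
    (hvcont : ∀ t ≥ (0 : ℝ), ContinuousOn (fun x => v x t) (closure Ω))
    (hvreg : ∀ t ≥ (0 : ℝ), ContDiffOn ℝ 1 (fun x => v x t) Ω)
    (hvpos : ∀ t ≥ (0 : ℝ), ∀ x ∈ closure Ω, 0 < v x t)
    (hent : Tendsto (fun t => ∫ x in Ω, (v x t - vt - vt * Real.log (v x t / vt)))
      atTop (𝓝 0))
    (hgrad : Tendsto (fun t => sSup ((fun x => ‖fderiv ℝ (fun y => v y t) x‖) '' Ω))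
      atTop (𝓝 0)) :
    Tendsto (fun t => ∫ x in Ω, |v x t - vt|) atTop (𝓝 0) :=
  stmt18_general Ω hΩbd vt hvt v hvcont hvpos hent
end
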